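/- For all y ≥ 0 and nonnegative integers m, n with n ≥ m: y^{m+1} ∫₀^∞ e^{-y(ρ-1)(1+sgn(ρ-1))} ρ^m P_n(y|1-ρ|) dρ ≤ m!·n!·Q_{m+n+1}(y), where P_n(z) = ∑_{j=0}^n (n!/j!) z^j and Q_N(y) = ∑_{j=0}^N 2^{N-j} y^j/j!. -/

import Mathlib

open MeasureTheory Real Finset

/-- The polynomial `P_n(z) = ∑_{j=0}^n (n!/j!) z^j`. -/
noncomputable def P (n : ℕ) (z : ℝ) : ℝ :=
  ∑ j ∈ Finset.range (n + 1), ((n.factorial : ℝ) / (j.factorial : ℝ)) * z ^ j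

/-- The polynomial `Q_N(y) = ∑_{j=0}^N 2^{N-j} y^j / j!`. -/
noncomputable def Q (N : ℕ) (y : ℝ) : ℝ :=
  ∑ j ∈ Finset.range (N + 1), 2 ^ (N - j) * y ^ j / (j.factorial : ℝ)

/-!
Split the integral at `ρ = 1`. On `(0, 1]` the exponential weight is `1`, and expanding `P_n` turns
the integral into Beta integrals `∫₀¹ ρ^m (1 - ρ)^j dρ = m! j! / (m + j + 1)!`; multiplied by
`y^(m+1)` these are the terms of index `> m` of `m! n! Q_{m+n+1}(y)`, without their powers of `2`.
On `(1, ∞)`, writing `ρ = 1 + t`, the weight is `e^{-2yt}`; the bound `(1 + t)^m ≤ 2^m (1 + t^m)`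
reduces everything to Gamma integrals, and the resulting sums `∑_j C(j+k, k) 2^{-(j+k+1)}` are
partial sums of a negative binomial series of total mass `1`. This leaves `2^m n! y^m + 2^m m! n!`,
which is at most the sum of the terms of index `m` and `0` of `m! n! Q_{m+n+1}(y)`.
-/

open Set Nat

lemma integrableOn_pow_mul_exp_neg_mul_Ioi (p : ℕ) {r : ℝ} (hr : 0 < r) :
    IntegrableOn (fun t : ℝ => t ^ p * exp (-(r * t))) (Ioi 0) := by
  simpa [rpow_natCast, neg_mul] using
    integrableOn_rpow_mul_exp_neg_mul_rpow (p := 1) (s := p) (neg_one_lt_zero.trans_le p.cast_nonneg)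
      zero_lt_one hr

lemma integral_pow_mul_exp_neg_mul_Ioi (p : ℕ) {r : ℝ} (hr : 0 < r) :
    ∫ t in Ioi (0:ℝ), t ^ p * exp (-(r * t)) = p ! / r ^ (p + 1) := by
  have h := integral_rpow_mul_exp_neg_mul_Ioi (a := p + 1) (by positivity) hr
  rw [add_sub_cancel_right, Gamma_nat_eq_factorial, ← Nat.cast_succ, rpow_natCast] at h
  simp_rw [rpow_natCast] at h
  rw [h, div_pow, one_pow, one_div_mul_eq_div]

lemma integral_pow_mul_one_sub_pow (a b : ℕ) :
    ∫ t in (0:ℝ)..1, t ^ a * (1 - t) ^ b = a ! * b ! / (a + b + 1)! := by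
  have h := Complex.Gamma_mul_Gamma_eq_betaIntegral (s := a + 1) (t := b + 1)
    (by simp; positivity) (by simp; positivity)
  rw [show (a + 1 + (b + 1) : ℂ) = ((a + b + 1 : ℕ) : ℂ) + 1 by push_cast; ring] at h
  simp only [Complex.Gamma_nat_eq_factorial, Complex.betaIntegral, add_sub_cancel_right] at h
  have hbeta : ∫ x in (0:ℝ)..1, (x:ℂ) ^ (a:ℂ) * (1 - (x:ℂ)) ^ (b:ℂ)
      = ((∫ t in (0:ℝ)..1, t ^ a * (1 - t) ^ b : ℝ) : ℂ) := by
    rw [← intervalIntegral.integral_ofReal]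
    refine intervalIntegral.integral_congr fun x _ => ?_
    simp
  rw [hbeta] at h
  rw [eq_div_iff (by positivity)]
  exact_mod_cast (h.trans (mul_comm _ _)).symm

lemma integral_Ioi_comp_add_right {E : Type*} [NormedAddCommGroup E] [NormedSpace ℝ E]
    (f : ℝ → E) (a : ℝ) : ∫ x in Ioi 0, f (x + a) = ∫ x in Ioi a, f x := by
  have := (measurePreserving_add_right volume a).setIntegral_image_emb
    (Homeomorph.addRight a).measurableEmbedding f (Ioi 0)
  rwa [image_add_const_Ioi, zero_add, eq_comm] at this

lemma integrableOn_Ioi_comp_add_right_iff {E : Type*} [NormedAddCommGroup E]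
    (f : ℝ → E) (a : ℝ) : IntegrableOn (fun x => f (x + a)) (Ioi 0) ↔ IntegrableOn f (Ioi a) := by
  have := (measurePreserving_add_right volume a).integrableOn_image
    (Homeomorph.addRight a).measurableEmbedding (f := f) (s := Ioi 0)
  rw [image_add_const_Ioi, zero_add] at this
  exact this.symm

lemma sum_choose_mul_half_pow_le_one (k N : ℕ) :
    ∑ j ∈ range N, ((j + k).choose k : ℝ) * (1 / 2) ^ (j + k + 1) ≤ 1 := by
  have hsum := hasSum_choose_mul_geometric_of_norm_lt_one (𝕜 := ℝ) k
    (r := 1 / 2) (by norm_num [abs_of_pos])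
  have := sum_le_hasSum (range N) (fun j _ => by positivity) hsum
  calc ∑ j ∈ range N, ((j + k).choose k : ℝ) * (1 / 2) ^ (j + k + 1)
      = (∑ j ∈ range N, ((j + k).choose k : ℝ) * (1 / 2) ^ j) * (1 / 2) ^ (k + 1) := by
        rw [sum_mul]; exact sum_congr rfl fun j _ => by ring
    _ ≤ 1 / (1 - 1 / 2) ^ (k + 1) * (1 / 2) ^ (k + 1) := by gcongr
    _ = 1 := by norm_num

lemma P_nonneg (n : ℕ) {z : ℝ} (hz : 0 ≤ z) : 0 ≤ P n z :=
  sum_nonneg fun j _ => by positivity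

@[fun_prop]
lemma continuous_P (n : ℕ) : Continuous (P n) := by
  unfold P; fun_prop

lemma integral_pow_mul_P_one_sub (m n : ℕ) (y : ℝ) :
    ∫ ρ in (0:ℝ)..1, ρ ^ m * P n (y * (1 - ρ)) =
      ∑ j ∈ range (n + 1), m ! * n ! * y ^ j / (m + j + 1)! := by
  have hexpand : ∀ ρ : ℝ, ρ ^ m * P n (y * (1 - ρ)) =
      ∑ j ∈ range (n + 1), n ! / j ! * y ^ j * (ρ ^ m * (1 - ρ) ^ j) := fun ρ => by
    simp only [P, mul_sum]
    exact sum_congr rfl fun j _ => by rw [mul_pow]; ring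
  simp_rw [hexpand]
  rw [intervalIntegral.integral_finsetSum fun j _ =>
    Continuous.intervalIntegrable (by fun_prop) _ _]
  refine sum_congr rfl fun j _ => ?_
  rw [intervalIntegral.integral_const_mul, integral_pow_mul_one_sub_pow]
  field_simp

section Laplace

variable (k n : ℕ) (y : ℝ) {r : ℝ}

lemma pow_mul_P_mul_exp_eq_sum (t : ℝ) :
    t ^ k * P n (y * t) * exp (-(r * t)) =
      ∑ j ∈ range (n + 1), n ! / j ! * y ^ j * (t ^ (j + k) * exp (-(r * t))) := by
  simp only [P, mul_sum, sum_mul]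
  exact sum_congr rfl fun j _ => by ring

lemma integrableOn_pow_mul_P_mul_exp (hr : 0 < r) :
    IntegrableOn (fun t => t ^ k * P n (y * t) * exp (-(r * t))) (Ioi 0) := by
  simp_rw [pow_mul_P_mul_exp_eq_sum]
  exact integrable_finsetSum _ fun j _ =>
    (integrableOn_pow_mul_exp_neg_mul_Ioi (j + k) hr).const_mul _

lemma integral_pow_mul_P_mul_exp (hr : 0 < r) :
    ∫ t in Ioi 0, t ^ k * P n (y * t) * exp (-(r * t)) =
      ∑ j ∈ range (n + 1), n ! / j ! * y ^ j * ((j + k)! / r ^ (j + k + 1)) := by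
  simp_rw [pow_mul_P_mul_exp_eq_sum]
  rw [integral_finsetSum _ fun j _ =>
    (integrableOn_pow_mul_exp_neg_mul_Ioi (j + k) hr).const_mul _]
  refine sum_congr rfl fun j _ => ?_
  rw [integral_const_mul, integral_pow_mul_exp_neg_mul_Ioi _ hr]

variable {y}

lemma pow_succ_mul_integral_pow_mul_P_mul_exp_le (hy : 0 < y) :
    y ^ (k + 1) * ∫ t in Ioi 0, t ^ k * P n (y * t) * exp (-(2 * y * t)) ≤ k ! * n ! := by
  rw [integral_pow_mul_P_mul_exp k n y (by positivity), mul_sum]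
  calc ∑ j ∈ range (n + 1), y ^ (k + 1) * (n ! / j ! * y ^ j * ((j + k)! / (2 * y) ^ (j + k + 1)))
      = ∑ j ∈ range (n + 1), k ! * n ! * (((j + k).choose k : ℝ) * (1 / 2) ^ (j + k + 1)) := by
        refine sum_congr rfl fun j _ => ?_
        rw [← Nat.add_choose_mul_factorial_mul_factorial]
        push_cast
        simp only [one_div, inv_pow]
        field_simp
        ring
    _ = k ! * n ! * ∑ j ∈ range (n + 1), ((j + k).choose k : ℝ) * (1 / 2) ^ (j + k + 1) :=
        (mul_sum _ _ _).symm
    _ ≤ k ! * n ! := mul_le_of_le_one_right (by positivity) (sum_choose_mul_half_pow_le_one k _)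

end Laplace

noncomputable def integrand (y : ℝ) (m n : ℕ) (ρ : ℝ) : ℝ :=
  exp (-(y * (ρ - 1)) * (1 + Real.sign (ρ - 1))) * ρ ^ m * P n (y * |1 - ρ|)

section Integrand

variable {y : ℝ} {m n : ℕ}

lemma integrand_of_le_one {ρ : ℝ} (hρ : ρ ≤ 1) :
    integrand y m n ρ = ρ ^ m * P n (y * (1 - ρ)) := by
  have hexponent : -(y * (ρ - 1)) * (1 + Real.sign (ρ - 1)) = 0 := by
    rcases hρ.lt_or_eq with hlt | rfl
    · rw [Real.sign_of_neg (by linarith)]; ring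
    · simp
  rw [integrand, hexponent, exp_zero, one_mul, abs_of_nonneg (by linarith)]

lemma integrand_add_one {t : ℝ} (ht : 0 < t) :
    integrand y m n (t + 1) = (t + 1) ^ m * P n (y * t) * exp (-(2 * y * t)) := by
  rw [integrand, add_sub_cancel_right, Real.sign_of_pos ht, show 1 - (t + 1) = -t by ring,
    abs_neg, abs_of_pos ht]
  ring_nf

lemma integrableOn_integrand_Ioc : IntegrableOn (integrand y m n) (Ioc 0 1) :=
  (Continuous.integrableOn_Ioc (by fun_prop)).congr_fun
    (fun ρ hρ => (integrand_of_le_one hρ.2).symm) measurableSet_Ioc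

lemma integral_integrand_Ioc :
    ∫ ρ in Ioc 0 1, integrand y m n ρ =
      ∑ j ∈ range (n + 1), m ! * n ! * y ^ j / (m + j + 1)! := by
  rw [setIntegral_congr_fun measurableSet_Ioc fun ρ hρ => integrand_of_le_one hρ.2,
    ← intervalIntegral.integral_of_le zero_le_one, integral_pow_mul_P_one_sub]

-- `t ^ 0` rather than `1`, so that the `k = 0` case of the lemmas above applies verbatim.
lemma one_add_pow_mul_P_mul_exp_le (hy : 0 ≤ y) {t : ℝ} (ht : 0 ≤ t) :
    (t + 1) ^ m * P n (y * t) * exp (-(2 * y * t)) ≤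
      2 ^ m * (t ^ 0 * P n (y * t) * exp (-(2 * y * t)) +
        t ^ m * P n (y * t) * exp (-(2 * y * t))) := by
  have hP := P_nonneg n (mul_nonneg hy ht)
  have hpow : (t + 1) ^ m ≤ 2 ^ m * (t ^ 0 + t ^ m) :=
    calc (t + 1) ^ m ≤ 2 ^ (m - 1) * (t ^ m + 1 ^ m) := add_pow_le ht zero_le_one m
      _ ≤ 2 ^ m * (t ^ 0 + t ^ m) := by
        rw [one_pow, pow_zero, add_comm (t ^ m)]
        gcongr
        · norm_num
        · omega
  calc (t + 1) ^ m * P n (y * t) * exp (-(2 * y * t))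
      ≤ 2 ^ m * (t ^ 0 + t ^ m) * P n (y * t) * exp (-(2 * y * t)) := by gcongr
    _ = _ := by ring

lemma integrableOn_integrand_Ioi_one (hy : 0 < y) : IntegrableOn (integrand y m n) (Ioi 1) := by
  rw [← integrableOn_Ioi_comp_add_right_iff]
  refine IntegrableOn.congr_fun ?_ (fun t ht => (integrand_add_one ht).symm) measurableSet_Ioi
  have hr : 0 < 2 * y := by positivity
  refine Integrable.mono' (((integrableOn_pow_mul_P_mul_exp 0 n y hr).add
      (integrableOn_pow_mul_P_mul_exp m n y hr)).const_mul (2 ^ m))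
    (Continuous.aestronglyMeasurable (by fun_prop)) ?_
  refine (ae_restrict_iff' measurableSet_Ioi).2 (Filter.Eventually.of_forall fun t ht => ?_)
  have ht : (0 : ℝ) < t := ht
  rw [norm_of_nonneg (by have := P_nonneg n (by positivity : 0 ≤ y * t); positivity)]
  exact one_add_pow_mul_P_mul_exp_le hy.le ht.le

lemma pow_succ_mul_integral_integrand_Ioi_one_le (hy : 0 < y) :
    y ^ (m + 1) * ∫ ρ in Ioi 1, integrand y m n ρ ≤ 2 ^ m * n ! * y ^ m + 2 ^ m * m ! * n ! := by
  have hint : ∀ k, IntegrableOn (fun t => t ^ k * P n (y * t) * exp (-(2 * y * t))) (Ioi 0) :=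
    fun k => integrableOn_pow_mul_P_mul_exp k n y (by positivity)
  have hbound : ∫ ρ in Ioi 1, integrand y m n ρ ≤ ∫ t in Ioi 0, 2 ^ m *
      (t ^ 0 * P n (y * t) * exp (-(2 * y * t)) + t ^ m * P n (y * t) * exp (-(2 * y * t))) := by
    rw [← integral_Ioi_comp_add_right,
      setIntegral_congr_fun measurableSet_Ioi fun t ht => integrand_add_one ht]
    refine integral_mono_of_nonneg ?_ (((hint 0).add (hint m)).const_mul _) ?_ <;>
      refine (ae_restrict_iff' measurableSet_Ioi).2 (Filter.Eventually.of_forall fun t ht => ?_)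
    · have ht : (0 : ℝ) < t := ht
      have := P_nonneg n (by positivity : 0 ≤ y * t)
      positivity
    · exact one_add_pow_mul_P_mul_exp_le hy.le (le_of_lt ht)
  rw [integral_const_mul, integral_add (hint 0) (hint m)] at hbound
  have h0 := pow_succ_mul_integral_pow_mul_P_mul_exp_le 0 n hy
  have hm := pow_succ_mul_integral_pow_mul_P_mul_exp_le m n hy
  set I : ℕ → ℝ := fun k => ∫ t in Ioi 0, t ^ k * P n (y * t) * exp (-(2 * y * t))
  calc y ^ (m + 1) * ∫ ρ in Ioi 1, integrand y m n ρ
      ≤ y ^ (m + 1) * (2 ^ m * (I 0 + I m)) := by gcongr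
    _ = 2 ^ m * y ^ m * (y ^ (0 + 1) * I 0) + 2 ^ m * (y ^ (m + 1) * I m) := by ring
    _ ≤ 2 ^ m * y ^ m * (0 ! * n !) + 2 ^ m * (m ! * n !) := by gcongr
    _ = 2 ^ m * n ! * y ^ m + 2 ^ m * m ! * n ! := by simp only [factorial_zero]; push_cast; ring

end Integrand

lemma pow_succ_mul_sum_add_le_mul_Q {y : ℝ} (hy : 0 ≤ y) {m n : ℕ} (hmn : m ≤ n) :
    y ^ (m + 1) * ∑ j ∈ range (n + 1), m ! * n ! * y ^ j / (m + j + 1)! +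
        (2 ^ m * n ! * y ^ m + 2 ^ m * m ! * n !) ≤ m ! * n ! * Q (m + n + 1) y := by
  set f : ℕ → ℝ := fun i => m ! * n ! * (2 ^ (m + n + 1 - i) * y ^ i / i !) with hf
  have hf_nonneg : ∀ i, 0 ≤ f i := fun i => by positivity
  have hQ : m ! * n ! * Q (m + n + 1) y =
      ∑ i ∈ range (m + 1), f i + ∑ j ∈ range (n + 1), f (m + 1 + j) := by
    rw [Q, mul_sum, show m + n + 1 + 1 = m + 1 + (n + 1) by ring, sum_range_add]
  -- `f 0` and `f m` each cover twice their share, which also settles `m = 0`, where they coincide.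
  have hhead : 2 ^ m * n ! * y ^ m + 2 ^ m * m ! * n ! ≤ ∑ i ∈ range (m + 1), f i := by
    have h0 : f 0 ≤ ∑ i ∈ range (m + 1), f i :=
      single_le_sum (fun i _ => hf_nonneg i) (by simp)
    have hm : f m ≤ ∑ i ∈ range (m + 1), f i :=
      single_le_sum (fun i _ => hf_nonneg i) (by simp)
    have hf0 : 2 * (2 ^ m * m ! * n !) ≤ f 0 := by
      have : (2 : ℝ) ^ (m + 1) ≤ 2 ^ (m + n + 1) := pow_le_pow_right₀ (by norm_num) (by omega)
      simp only [hf, pow_zero, factorial_zero, cast_one, div_one, mul_one, Nat.sub_zero]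
      have hfact : (0 : ℝ) ≤ m ! * n ! := by positivity
      rw [pow_succ] at this
      nlinarith
    have hfm : 2 * (2 ^ m * n ! * y ^ m) ≤ f m := by
      have hfm_eq : f m = n ! * y ^ m * 2 ^ (n + 1) := by
        simp only [hf, show m + n + 1 - m = n + 1 by omega]
        field_simp
      calc 2 * (2 ^ m * n ! * y ^ m) = n ! * y ^ m * 2 ^ (m + 1) := by ring
        _ ≤ f m := by
          rw [hfm_eq]
          gcongr
          · norm_num
    linarith
  have htail : y ^ (m + 1) * ∑ j ∈ range (n + 1), m ! * n ! * y ^ j / (m + j + 1)! ≤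
      ∑ j ∈ range (n + 1), f (m + 1 + j) := by
    rw [mul_sum]
    refine sum_le_sum fun j _ => ?_
    calc y ^ (m + 1) * (m ! * n ! * y ^ j / (m + j + 1)!)
        = m ! * n ! * (1 * y ^ (m + 1 + j) / (m + 1 + j)!) := by
          rw [show m + j + 1 = m + 1 + j by ring, pow_add]; ring
      _ ≤ m ! * n ! * (2 ^ (m + n + 1 - (m + 1 + j)) * y ^ (m + 1 + j) / (m + 1 + j)!) := by
          gcongr
          exact one_le_pow₀ (by norm_num)
  linarith

theorem stmt_3 (y : ℝ) (hy : 0 ≤ y) (m n : ℕ) (hmn : m ≤ n) :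
    y ^ (m + 1) *
        ∫ ρ in Set.Ioi (0:ℝ),
          Real.exp (-(y * (ρ - 1)) * (1 + Real.sign (ρ - 1))) * ρ ^ m * P n (y * |1 - ρ|) ≤
      (m.factorial : ℝ) * (n.factorial : ℝ) * Q (m + n + 1) y := by
  -- At `y = 0` the integral over `(1, ∞)` diverges, so the splitting below needs `0 < y`.
  rcases hy.eq_or_lt with rfl | hy
  · rw [zero_pow (succ_ne_zero m), zero_mul]
    exact mul_nonneg (by positivity) (sum_nonneg fun j _ => by positivity)
  change y ^ (m + 1) * ∫ ρ in Ioi 0, integrand y m n ρ ≤ _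
  rw [← Ioc_union_Ioi_eq_Ioi zero_le_one, setIntegral_union (Ioc_disjoint_Ioi le_rfl)
    measurableSet_Ioi integrableOn_integrand_Ioc (integrableOn_integrand_Ioi_one hy),
    mul_add, integral_integrand_Ioc]
  linarith [pow_succ_mul_integral_integrand_Ioi_one_le (m := m) (n := n) hy,
    pow_succ_mul_sum_add_le_mul_Q hy.le hmn]
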